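/- Fix a positive definite inner product ⟨·,·⟩ on ℝ^ℓ and nonzero vectors β₁, …, β_ℓ ∈ ℝ^ℓ. Set (α,β) := 2⟨α,β⟩/⟨β,β⟩ and s_β(α) := α − (α,β)β. For λ ∈ ℝ^ℓ define xⱼ := (λ, s_{β₁}s_{β₂}⋯s_{β_{j−1}}(βⱼ)) for j = 1, …, ℓ (with x₁ = (λ, β₁)). Then for every j = 1, …, ℓ one has xⱼ + Σ_{i=1}^{j−1} (βᵢ, βⱼ) xᵢ = (λ, βⱼ). In other words, the point p_I(λ) = (x₁, …, x_ℓ) is the solution of the triangular linear system expressing that each inequality xⱼ ≤ −f_{j−1}(x₁,…,x_{j−1}) + (λ,βⱼ) defining the cube P_I(λ) holds with equality, where f_{j−1}(x₁,…,x_{j−1}) = Σ_{i=1}^{j−1} (βᵢ,βⱼ)xᵢ. -/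

import Mathlib

open RealInnerProductSpace

/-- The Weyl-type pairing `(α, β) = 2⟨α,β⟩/⟨β,β⟩`. -/
noncomputable def wPair {V : Type*} [NormedAddCommGroup V] [InnerProductSpace ℝ V]
    (α β : V) : ℝ :=
  2 * ⟪α, β⟫ / ⟪β, β⟫

/-- `reflSeq β k v = s_{β 0} (s_{β 1} (⋯ (s_{β (k-1)} v)))`, where
`s_β(α) = α − (α,β)β` is the reflection in the hyperplane orthogonal to `β`. -/
noncomputable def reflSeq {V : Type*} [NormedAddCommGroup V] [InnerProductSpace ℝ V]
    (β : ℕ → V) : ℕ → V → V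
  | 0, v => v
  | k + 1, v => reflSeq β k (v - wPair v (β k) • β k)

/-!
Write `yₖ = s_{β₀} ⋯ s_{β_{k-1}}(βₖ)`. Since `s_{β₀} ⋯ s_{β_{k-1}}` is linear, peeling off its last
factor gives `s_{β₀} ⋯ s_{βₖ}(v) = s_{β₀} ⋯ s_{β_{k-1}}(v) − (v, βₖ) yₖ`, hence
`⟨λ, s_{β₀} ⋯ s_{β_{j-1}}(v)⟩ = ⟨λ, v⟩ − Σ_{k<j} (v, βₖ) ⟨λ, yₖ⟩`. Dividing by `⟨v, v⟩/2`, and using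
both `⟨yₖ, yₖ⟩ = ⟨βₖ, βₖ⟩` (the reflections are isometries) and `⟨βₖ, βₖ⟩ (v, βₖ) = ⟨v, v⟩ (βₖ, v)`,
turns this into `(λ, s_{β₀} ⋯ s_{β_{j-1}}(v)) = (λ, v) − Σ_{k<j} (βₖ, v) (λ, yₖ)`, which for
`v = βⱼ` is the triangular system.
-/

section

variable {V : Type*} [NormedAddCommGroup V] [InnerProductSpace ℝ V]

theorem sub_wPair_smul_eq_reflection (v b : V) :
    v - wPair v b • b = (ℝ ∙ b)ᗮ.reflection v := by
  rw [Submodule.reflection_orthogonal_apply, Submodule.reflection_singleton_apply, wPair,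
    real_inner_self_eq_norm_sq, real_inner_comm]
  simp only [RCLike.ofReal_real_eq_id, id]
  module

noncomputable def reflSeqIsometry (β : ℕ → V) : ℕ → V ≃ₗᵢ[ℝ] V
  | 0 => LinearIsometryEquiv.refl ℝ V
  | k + 1 => ((ℝ ∙ β k)ᗮ.reflection).trans (reflSeqIsometry β k)

theorem reflSeq_eq_reflSeqIsometry (β : ℕ → V) (k : ℕ) (v : V) :
    reflSeq β k v = reflSeqIsometry β k v := by
  induction k generalizing v with
  | zero => rfl
  | succ k ih => rw [reflSeq, ih, sub_wPair_smul_eq_reflection]; rfl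

theorem reflSeq_succ_eq_sub (β : ℕ → V) (k : ℕ) (v : V) :
    reflSeq β (k + 1) v = reflSeq β k v - wPair v (β k) • reflSeq β k (β k) := by
  simp only [reflSeq, reflSeq_eq_reflSeqIsometry, map_sub, map_smul]

theorem inner_reflSeq_self (β : ℕ → V) (k : ℕ) (v : V) :
    ⟪reflSeq β k v, reflSeq β k v⟫ = ⟪v, v⟫ := by
  rw [reflSeq_eq_reflSeqIsometry, LinearIsometryEquiv.inner_map_map]

theorem inner_reflSeq_right (β : ℕ → V) (lam : V) (j : ℕ) (v : V) :
    ⟪lam, reflSeq β j v⟫ =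
      ⟪lam, v⟫ - ∑ k ∈ Finset.range j, wPair v (β k) * ⟪lam, reflSeq β k (β k)⟫ := by
  induction j with
  | zero => simp [reflSeq]
  | succ j ih =>
    rw [reflSeq_succ_eq_sub, inner_sub_right, real_inner_smul_right, ih, Finset.sum_range_succ]
    ring

theorem wPair_reflSeq_right (β : ℕ → V) (lam : V) (j : ℕ) (v : V) :
    wPair lam (reflSeq β j v) =
      wPair lam v - ∑ k ∈ Finset.range j, wPair (β k) v * wPair lam (reflSeq β k (β k)) := by
  unfold wPair
  simp only [inner_reflSeq_self]
  rw [inner_reflSeq_right, mul_sub, sub_div, Finset.mul_sum, Finset.sum_div]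
  congr 1
  refine Finset.sum_congr rfl fun k _ => ?_
  rw [wPair, real_inner_comm (β k) v]
  ring

end

theorem vertex_coords_solve_triangular_system
    (ℓ : ℕ) (V : Type*) [NormedAddCommGroup V] [InnerProductSpace ℝ V]
    (β : ℕ → V) (lam : V) :
    ∀ j < ℓ,
      wPair lam (reflSeq β j (β j)) +
          ∑ i ∈ Finset.range j, wPair (β i) (β j) * wPair lam (reflSeq β i (β i)) =
        wPair lam (β j) := by
  intro j _
  rw [wPair_reflSeq_right]
  ring
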